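/- arXiv:2007.00853 — 6 statements merged into one kernel-verified Lean document; each statement's English description precedes it below -/
import Mathlib

section
/- Let E be a countable directed graph, let v, w ∈ E⁰ and m, n ∈ ℤ. Then H(w, n) ⊆ H(v, m) if and only if n − m ≥ 0 and v E^{n−m} w ≠ ∅ (where v E⁰ w ≠ ∅ means v = w). -/
/-- A directed graph: a set of vertices, a set of edges, and range and source maps. -/
structure DirGraph where
  V : Type
  E : Type
  r : E → V
  s : E → V

namespace DirGraph

variable (G : DirGraph)

/-- The skew-product graph `E ×₁ ℤ`. -/
def skew : DirGraph where
  V := G.V × ℤ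
  E := G.E × ℤ
  r := fun e => (G.r e.1, e.2 + 1)
  s := fun e => (G.s e.1, e.2)

/-- `G.PathRel v w n` : there is a path of length `n` from `v` to `w`
(vertices are paths of length `0`). -/
inductive PathRel : G.V → G.V → ℕ → Prop
  | nil (v : G.V) : PathRel v v 0
  | cons (e : G.E) {w : G.V} {n : ℕ} : PathRel (G.r e) w n → PathRel (G.s e) w (n + 1)

/-- A set of vertices is hereditary if it contains the range of every edge whose
source it contains. -/
def Hereditary (H : Set G.V) : Prop := ∀ e : G.E, G.s e ∈ H → G.r e ∈ H

/-- `H(v, n)`: the smallest hereditary subset of `(E ×₁ ℤ)⁰` containing `(v, n)`. -/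
def Hgen (v : G.V) (n : ℤ) : Set (G.V × ℤ) :=
  ⋂₀ {K : Set (G.V × ℤ) | G.skew.Hereditary K ∧ (v, n) ∈ K}

/-- The translation action `lt_k(H) = {(v, n + k) : (v, n) ∈ H}`. -/
def lt (k : ℤ) (H : Set (G.V × ℤ)) : Set (G.V × ℤ) :=
  (fun p : G.V × ℤ => (p.1, p.2 + k)) '' H

/-- The hereditary set `H₀ = {(v, n) : v ∈ E⁰, n ≥ 0}`. -/
def H0 : Set (G.V × ℤ) := {p | 0 ≤ p.2}

/-- A graph is amplified if for all vertices `v, w` the set `vE¹w` of edges from `v`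
to `w` is empty or infinite. -/
def Amplified : Prop :=
  ∀ v w : G.V, {e : G.E | G.s e = v ∧ G.r e = w} = ∅ ∨ {e : G.E | G.s e = v ∧ G.r e = w}.Infinite

/-- A graph is connected if the smallest equivalence relation on the vertices containing
`{(s e, r e) : e ∈ E¹}` is everything. -/
def Connected : Prop :=
  ∀ v w : G.V, Relation.EqvGen (fun a b => ∃ e : G.E, G.s e = a ∧ G.r e = b) v w

/-- `L` has a unique predecessor in the poset of hereditary subsets of `(E ×₁ ℤ)⁰`. -/
def UniquePred (L : Set (G.V × ℤ)) : Prop :=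
  ∃ K : Set (G.V × ℤ), G.skew.Hereditary K ∧ K ⊂ L ∧
    ∀ K' : Set (G.V × ℤ), G.skew.Hereditary K' → K' ⊂ L → K' ⊆ K

/-- `ℋ_vert`: the hereditary subsets of `(E ×₁ ℤ)⁰` having a unique predecessor. -/
def HVert : Set (Set (G.V × ℤ)) := {L | G.skew.Hereditary L ∧ G.UniquePred L}

/-- `V₀ = {H(v, 0) : v ∈ E⁰}`. -/
def V0 : Set (Set (G.V × ℤ)) := {L | ∃ v : G.V, L = G.Hgen v 0}


theorem lt_hereditary (k : ℤ) {H : Set (G.V × ℤ)}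
    (hH : G.skew.Hereditary H) : G.skew.Hereditary (G.lt k H) := by
  rintro ⟨f, m⟩ hs
  obtain ⟨⟨v, n⟩, hvn, heq⟩ := hs
  have h1 : v = G.s f := congrArg Prod.fst heq
  have h2 : n + k = m := congrArg Prod.snd heq
  subst h1
  refine ⟨(G.r f, n + 1), hH (f, n) hvn, ?_⟩
  show ((G.r f : G.V), n + 1 + k) = (G.r f, m + 1)
  rw [Prod.ext_iff]
  exact ⟨rfl, by omega⟩

theorem H0_hereditary : G.skew.Hereditary G.H0 := by
  rintro ⟨f, m⟩ hm
  have : 0 ≤ m := hm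
  show 0 ≤ m + 1
  omega

/-- The hereditary subsets of the skew-product graph, as a type. -/
def HS := {L : Set (G.V × ℤ) // G.skew.Hereditary L}

/-- Translation on hereditary subsets of the skew product. -/
def ltH (k : ℤ) (A : G.HS) : G.HS := ⟨G.lt k A.1, G.lt_hereditary k A.2⟩

/-- `H₀` as an element of `G.HS`. -/
def H0H : G.HS := ⟨G.H0, G.H0_hereditary⟩

/-- The vertex set `Ē⁰` of the graph recovered from `(ℋ(E ×₁ ℤ), ⊆, lt, H₀)`. -/
def Ebar0 : Set (Set (G.V × ℤ)) := {L | L ∈ G.HVert ∧ L ⊆ G.H0 ∧ ¬ L ⊆ G.lt 1 G.H0}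

/-- The graph `Ē` recovered from `(ℋ(E ×₁ ℤ), ⊆, lt, H₀)`. -/
noncomputable def Ebar : DirGraph where
  V := G.Ebar0
  E := {t : Set (G.V × ℤ) × ℕ × Set (G.V × ℤ) //
          t.1 ∈ G.Ebar0 ∧ t.2.2 ∈ G.Ebar0 ∧ G.lt 1 t.2.2 ⊆ t.1}
  s := fun t => ⟨t.1.1, t.2.1⟩
  r := fun t => ⟨t.1.2.2, t.2.2.1⟩

end DirGraph

open DirGraph

namespace DirGraph

/-- Paths can be extended at the range end. -/
theorem PathRel.snoc {G : DirGraph} {a b : G.V} {k : ℕ} (h : G.PathRel a b k)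
    (e : G.E) (he : G.s e = b) : G.PathRel a (G.r e) (k + 1) := by
  induction h with
  | nil v => subst he; exact .cons e (.nil _)
  | cons f h ih => exact .cons f (ih he)

/-- Explicit description of `Hgen`. -/
def HgenSet (G : DirGraph) (v : G.V) (m : ℤ) : Set (G.V × ℤ) :=
  {p | ∃ k : ℕ, G.PathRel v p.1 k ∧ p.2 = m + k}

theorem hgenSet_hereditary (G : DirGraph) (v : G.V) (m : ℤ) :
    G.skew.Hereditary (G.HgenSet v m) := by
  rintro ⟨e, q⟩ ⟨k, hp, hq⟩
  refine ⟨k + 1, hp.snoc e rfl, ?_⟩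
  have hq' : q = m + (k : ℤ) := hq
  show q + 1 = m + ((k : ℤ) + 1)
  omega

theorem pathRel_mem {G : DirGraph} {K : Set (G.V × ℤ)} (hK : G.skew.Hereditary K)
    {a b : G.V} {k : ℕ} (h : G.PathRel a b k) :
    ∀ p : ℤ, (a, p) ∈ K → (b, p + k) ∈ K := by
  induction h with
  | nil v => intro p hp; simpa using hp
  | cons e h ih =>
    intro p hp
    have := ih (p + 1) (hK (e, p) hp)
    convert this using 2
    push_cast; omega

theorem hgen_eq (G : DirGraph) (v : G.V) (m : ℤ) : G.Hgen v m = G.HgenSet v m := by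
  apply le_antisymm
  · exact Set.sInter_subset_of_mem ⟨G.hgenSet_hereditary v m, ⟨0, .nil v, by simp⟩⟩
  · rintro ⟨u, q⟩ ⟨k, hp, hq⟩ K ⟨hK, hvK⟩
    have h2 := pathRel_mem hK hp m hvK
    have hq' : q = m + (k : ℤ) := hq
    subst hq'
    exact h2

end DirGraph

theorem hgen_subset_iff (G : DirGraph) [Countable G.V] [Countable G.E]
    (v w : G.V) (m n : ℤ) :
    G.Hgen w n ⊆ G.Hgen v m ↔ ∃ k : ℕ, (k : ℤ) = n - m ∧ G.PathRel v w k := by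
  constructor
  · intro h
    have hw : (w, n) ∈ G.Hgen v m := by
      apply h
      rw [hgen_eq]
      exact ⟨0, .nil w, by simp⟩
    rw [hgen_eq] at hw
    obtain ⟨k, hp, hq⟩ := hw
    exact ⟨k, by omega, hp⟩
  · rintro ⟨k, hk, hp⟩
    apply Set.sInter_subset_of_mem
    refine ⟨(hgen_eq G v m ▸ G.hgenSet_hereditary v m : _), ?_⟩
    rw [hgen_eq]
    exact ⟨k, hp, by omega⟩
end

section
/- Let E be a countable amplified directed graph. A hereditary subset H of (E ×₁ ℤ)⁰ has a unique predecessor in the poset ℋ(E ×₁ ℤ) of hereditary subsets ordered by inclusion if and only if H = H(v, n) for some v ∈ E⁰ and n ∈ ℤ. That is, ℋ_vert = {H(v, n) : v ∈ E⁰ and n ∈ ℤ}. -/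
open DirGraph

lemma my_mem_Hgen (G : DirGraph) (v : G.V) (n : ℤ) : (v, n) ∈ G.Hgen v n := by
  intro K hK
  exact hK.2

lemma my_Hgen_hered (G : DirGraph) (v : G.V) (n : ℤ) : G.skew.Hereditary (G.Hgen v n) := by
  intro e he K hK
  exact hK.1 e (he K hK)

lemma my_Hgen_subset (G : DirGraph) (v : G.V) (n : ℤ) {K : Set (G.V × ℤ)}
    (hK : G.skew.Hereditary K) (hv : (v, n) ∈ K) : G.Hgen v n ⊆ K :=
  Set.sInter_subset_of_mem ⟨hK, hv⟩

lemma my_Hgen_level (G : DirGraph) (v : G.V) (n : ℤ) {p : G.V × ℤ} (hp : p ∈ G.Hgen v n) :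
    n < p.2 ∨ p = (v, n) := by
  have hS : G.Hgen v n ⊆ {p : G.V × ℤ | n < p.2 ∨ p = (v, n)} := by
    apply my_Hgen_subset
    · rintro ⟨f, m⟩ hs
      rcases hs with h | h
      · left
        simp only [skew, Set.mem_setOf_eq] at h ⊢
        omega
      · left
        have : m = n := congrArg Prod.snd h
        simp only [skew, Set.mem_setOf_eq]
        omega
    · right; rfl
  exact hS hp

theorem hvert_eq (G : DirGraph) [Countable G.V] [Countable G.E] (hG : G.Amplified) :
    G.HVert = {L : Set (G.V × ℤ) | ∃ (v : G.V) (n : ℤ), L = G.Hgen v n} := by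
  ext L
  constructor
  · rintro ⟨hL, K, hK, hKL, hmax⟩
    by_contra h
    simp only [Set.mem_setOf_eq] at h
    push_neg at h
    apply hKL.2
    intro p hp
    have hsub : G.Hgen p.1 p.2 ⊆ L := my_Hgen_subset G p.1 p.2 hL hp
    have hne : G.Hgen p.1 p.2 ≠ L := fun heq => h p.1 p.2 heq.symm
    have := hmax (G.Hgen p.1 p.2) (my_Hgen_hered G p.1 p.2) (hsub.ssubset_of_ne hne)
    exact this (my_mem_Hgen G p.1 p.2)
  · rintro ⟨v, n, rfl⟩
    refine ⟨my_Hgen_hered G v n, G.Hgen v n \ {(v, n)}, ?_, ?_, ?_⟩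
    · -- hereditary
      rintro e ⟨hs, hns⟩
      refine ⟨my_Hgen_hered G v n e hs, ?_⟩
      intro hr
      rcases my_Hgen_level G v n hs with h | h
      · have : (e.2 : ℤ) + 1 = n := congrArg Prod.snd hr
        simp only [skew] at h this
        omega
      · exact hns h
    · -- proper subset
      refine ⟨Set.diff_subset, fun hsub => ?_⟩
      have := hsub (my_mem_Hgen G v n)
      exact this.2 rfl
    · -- maximality
      intro K' hK' hK'L
      have hvn : (v, n) ∉ K' := by
        intro hv
        exact hK'L.2 (my_Hgen_subset G v n hK' hv)
      intro p hp
      exact ⟨hK'L.1 hp, fun heq => hvn (heq ▸ hp)⟩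
end

section
/- Let E be a countable amplified directed graph and define Ē⁰ := {H ∈ ℋ_vert : H ⊆ H₀ and H ⊄ lt₁(H₀)}. Then Ē⁰ = {H(v, 0) : v ∈ E⁰}, and the map v ↦ H(v, 0) is a bijection from E⁰ onto Ē⁰. -/
open DirGraph

namespace DirGraph

variable (G : DirGraph)

theorem Hgen_mem (v : G.V) (n : ℤ) : (v, n) ∈ G.Hgen v n :=
  fun _K hK => hK.2

theorem Hgen_hereditary (v : G.V) (n : ℤ) : G.skew.Hereditary (G.Hgen v n) :=
  fun e hs K hK => hK.1 e (hs K hK)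

theorem Hgen_min {K : Set (G.V × ℤ)} (hK : G.skew.Hereditary K) {v : G.V} {n : ℤ}
    (hv : (v, n) ∈ K) : G.Hgen v n ⊆ K :=
  fun _p hp => hp K ⟨hK, hv⟩

theorem Hgen_subset_H0 (v : G.V) : G.Hgen v 0 ⊆ G.H0 :=
  G.Hgen_min G.H0_hereditary (by simp [H0])

theorem diff_hereditary {L : Set (G.V × ℤ)} (hL : G.skew.Hereditary L)
    (hL0 : L ⊆ G.H0) (v : G.V) : G.skew.Hereditary (L \ {(v, 0)}) := by
  rintro ⟨e, n⟩ ⟨hs, -⟩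
  refine ⟨hL (e, n) hs, ?_⟩
  have hn : (0 : ℤ) ≤ n := hL0 hs
  intro h
  have : n + 1 = 0 := congrArg Prod.snd h
  omega

theorem Hgen_zero_eq {v w : G.V} (h : (w, 0) ∈ G.Hgen v 0) : w = v := by
  set S : Set (G.V × ℤ) :=
    {p | p = (v, 0) ∨ (1 ≤ p.2 ∧ p ∈ G.Hgen v 0)} with hS
  have hSher : G.skew.Hereditary S := by
    rintro ⟨e, n⟩ hmem'
    have : ((G.s e : G.V), n) ∈ S := hmem'
    show ((G.r e : G.V), n + 1) ∈ S
    rcases this with (heq | ⟨hn, hmem⟩)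
    · have h1 : G.s e = v := congrArg Prod.fst heq
      have h2 : n = 0 := congrArg Prod.snd heq
      refine Or.inr ⟨by omega, ?_⟩
      have : ((G.s e : G.V), n) ∈ G.Hgen v 0 := by rw [h1, h2]; exact G.Hgen_mem v 0
      exact G.Hgen_hereditary v 0 (e, n) this
    · exact Or.inr ⟨by omega, G.Hgen_hereditary v 0 (e, n) hmem⟩
  have hsub : G.Hgen v 0 ⊆ S := G.Hgen_min hSher (Or.inl rfl)
  rcases hsub h with heq | ⟨hn, -⟩
  · exact congrArg Prod.fst heq
  · omega

theorem mem_Ebar0 (v : G.V) : G.Hgen v 0 ∈ G.Ebar0 := by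
  refine ⟨⟨G.Hgen_hereditary v 0, ?_⟩, G.Hgen_subset_H0 v, ?_⟩
  · refine ⟨G.Hgen v 0 \ {(v, 0)},
      G.diff_hereditary (G.Hgen_hereditary v 0) (G.Hgen_subset_H0 v) v,
      ⟨Set.diff_subset, fun hsub => (hsub (G.Hgen_mem v 0)).2 rfl⟩, ?_⟩
    intro K' hK' hK'L
    have hvnot : (v, 0) ∉ K' := by
      intro hv
      exact hK'L.2 ((G.Hgen_min hK' hv))
    intro p hp
    exact ⟨hK'L.1 hp, fun he => hvnot (he ▸ hp)⟩
  · intro hsub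
    obtain ⟨⟨u, n⟩, hu, heq⟩ := hsub (G.Hgen_mem v 0)
    have h2 : n + 1 = 0 := congrArg Prod.snd heq
    have : (0 : ℤ) ≤ n := hu
    omega

end DirGraph

theorem ebar0_eq (G : DirGraph) [Countable G.V] [Countable G.E] (hG : G.Amplified) :
    G.Ebar0 = {L : Set (G.V × ℤ) | ∃ v : G.V, L = G.Hgen v 0} ∧
      Function.Injective (fun v : G.V => G.Hgen v 0) ∧
      Set.range (fun v : G.V => G.Hgen v 0) = G.Ebar0 := by
  have hrange : G.Ebar0 = {L : Set (G.V × ℤ) | ∃ v : G.V, L = G.Hgen v 0} := by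
    ext L
    constructor
    · rintro ⟨⟨hL, K, hKher, hKL, hKmax⟩, hH0, hnot⟩
      obtain ⟨⟨v, n⟩, hvL, hneq⟩ := Set.not_subset.mp hnot
      have hn0 : n = 0 := by
        have h1 : (0 : ℤ) ≤ n := hH0 hvL
        by_contra hne
        exact hneq ⟨(v, n - 1), show (0:ℤ) ≤ n - 1 by omega,
          by simp [Prod.ext_iff]⟩
      subst hn0
      refine ⟨v, ?_⟩
      have hsub : G.Hgen v 0 ⊆ L := G.Hgen_min hL hvL
      by_contra hne
      have hssub : G.Hgen v 0 ⊂ L := ⟨hsub, fun h => hne (subset_antisymm h hsub)⟩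
      have h1 : G.Hgen v 0 ⊆ K := hKmax _ (G.Hgen_hereditary v 0) hssub
      have h2 : L \ {(v, 0)} ⊆ K :=
        hKmax _ (G.diff_hereditary hL hH0 v)
          ⟨Set.diff_subset, fun h => (h hvL).2 rfl⟩
      apply hKL.2
      intro p hp
      by_cases hpv : p = (v, 0)
      · exact h1 (hpv ▸ G.Hgen_mem v 0)
      · exact h2 ⟨hp, hpv⟩
    · rintro ⟨v, rfl⟩; exact G.mem_Ebar0 v
  refine ⟨hrange, ?_, ?_⟩
  · intro v w h
    have h' : G.Hgen v 0 = G.Hgen w 0 := h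
    exact G.Hgen_zero_eq (h' ▸ G.Hgen_mem v 0)
  · ext L
    simp only [hrange, Set.mem_range, Set.mem_setOf_eq]
    exact ⟨fun ⟨v, h⟩ => ⟨v, h.symm⟩, fun ⟨v, h⟩ => ⟨v, h.symm⟩⟩
end

section
/- Let E be a countable directed graph and set V₀ := {H(v, 0) : v ∈ E⁰}. If H and K are distinct elements of V₀ and n ≥ 0, then H ⊄ lt_n(K). -/
open DirGraph

theorem pathrel_snoc (G : DirGraph) {a b : G.V} {n : ℕ} (h : G.PathRel a b n)
    (e : G.E) (he : G.s e = b) : G.PathRel a (G.r e) (n + 1) := by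
  induction h with
  | nil v => subst he; exact PathRel.cons e (PathRel.nil _)
  | cons f _ ih => exact PathRel.cons f (ih he)

theorem mem_Hgen_path (G : DirGraph) (w : G.V) (k : ℤ) {u : G.V} {m : ℤ}
    (h : (u, m) ∈ G.Hgen w k) : ∃ q : ℕ, G.PathRel w u q ∧ m = k + q := by
  have hS : G.skew.Hereditary {p : G.V × ℤ | ∃ q : ℕ, G.PathRel w p.1 q ∧ p.2 = k + q} := by
    rintro ⟨f, mm⟩ ⟨q, hq, hm⟩
    simp only [DirGraph.skew] at hq hm ⊢
    exact ⟨q + 1, pathrel_snoc G hq f rfl, by push_cast; omega⟩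
  exact h _ ⟨hS, ⟨0, PathRel.nil w, by simp⟩⟩

theorem self_mem_Hgen (G : DirGraph) (w : G.V) (k : ℤ) : (w, k) ∈ G.Hgen w k :=
  fun _ hK => hK.2

theorem v0_not_subset_translate (G : DirGraph) [Countable G.V] [Countable G.E]
    (v w : G.V) (hvw : G.Hgen v 0 ≠ G.Hgen w 0) (n : ℤ) (hn : 0 ≤ n) :
    ¬ G.Hgen v 0 ⊆ G.lt n (G.Hgen w 0) := by
  intro hsub
  obtain ⟨⟨u, m⟩, hu, heq⟩ := hsub (self_mem_Hgen G v 0)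
  simp only [Prod.mk.injEq] at heq
  obtain ⟨h1, h2⟩ := heq
  subst h1
  obtain ⟨q, hq, hm⟩ := mem_Hgen_path G w 0 hu
  have hq0 : q = 0 := by omega
  subst hq0
  cases hq
  exact hvw rfl
end

section
/- Suppose E and F are countable amplified directed graphs. If there exists a bijection ρ : ℋ(E ×₁ ℤ) → ℋ(F ×₁ ℤ) such that ρ and ρ⁻¹ preserve inclusion and ρ(lt_n^E(H)) = lt_n^F(ρ(H)) for all H ∈ ℋ(E ×₁ ℤ) and n ∈ ℤ, then there exists a bijection ρ̄ : ℋ(E ×₁ ℤ) → ℋ(F ×₁ ℤ) with the same properties that moreover satisfies ρ̄(H₀^E) = H₀^F. -/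
/-!
The hereditary sets with a unique predecessor are exactly the principal ones `H(v, n)`, so `ρ`
induces a bijection `σ` of the vertices of the skew products with `ρ (H p) = H (σ p)`. It
preserves reachability, hence its covering pairs, which are the edges of the skew product.
Equivariance forces `σ (v, n) = (φ v, n + g v)`, and then `φ : E⁰ → F⁰` is a graph isomorphism
(up to edge multiplicities). Transporting hereditary sets along `φ × id` instead of `ρ` forgets
the shifts `g`, so the new bijection sends `H₀` to `H₀`.
-/

namespace DirGraph

open Relation

def Adj (G : DirGraph) (v w : G.V) : Prop := ∃ e, G.s e = v ∧ G.r e = w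

variable {G F : DirGraph}

theorem hereditary_iff_adj {H : Set G.V} :
    G.Hereditary H ↔ ∀ v w, G.Adj v w → v ∈ H → w ∈ H :=
  ⟨fun hH _ _ ⟨e, hs, hr⟩ hv => hr ▸ hH e (hs ▸ hv), fun hH e => hH _ _ ⟨e, rfl, rfl⟩⟩

theorem Hereditary.preimage {f : G.V → F.V} (hf : ∀ v w, G.Adj v w → F.Adj (f v) (f w))
    {K : Set F.V} (hK : F.Hereditary K) : G.Hereditary (f ⁻¹' K) :=
  hereditary_iff_adj.mpr fun v w hvw => hereditary_iff_adj.mp hK _ _ (hf v w hvw)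

theorem skew_adj_iff {p q : G.V × ℤ} :
    G.skew.Adj p q ↔ G.Adj p.1 q.1 ∧ q.2 = p.2 + 1 := by
  constructor
  · rintro ⟨⟨e, n⟩, rfl, rfl⟩
    exact ⟨⟨e, rfl, rfl⟩, rfl⟩
  · rintro ⟨⟨e, hs, hr⟩, hq⟩
    exact ⟨(e, p.2), Prod.ext hs rfl, Prod.ext hr hq.symm⟩

theorem skew_reach_eq_or_lt {p q : G.V × ℤ} (h : ReflTransGen G.skew.Adj p q) :
    p = q ∨ p.2 < q.2 := by
  induction h with
  | refl => exact .inl rfl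
  | tail _ hqr ih =>
    have := (skew_adj_iff.mp hqr).2
    right; rcases ih with rfl | h <;> omega

theorem skew_reach_antisymm {p q : G.V × ℤ} (hpq : ReflTransGen G.skew.Adj p q)
    (hqp : ReflTransGen G.skew.Adj q p) : p = q := by
  rcases skew_reach_eq_or_lt hpq with h | h
  · exact h
  rcases skew_reach_eq_or_lt hqp with h' | h'
  · exact h'.symm
  · omega

/-- Holds because every edge raises the level by exactly one. -/
theorem skew_adj_iff_covBy {p q : G.V × ℤ} :
    G.skew.Adj p q ↔ p ≠ q ∧ ReflTransGen G.skew.Adj p q ∧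
      ∀ u : G.V × ℤ, ReflTransGen G.skew.Adj p u → ReflTransGen G.skew.Adj u q →
        u = p ∨ u = q := by
  constructor
  · intro hpq
    have hlevel := (skew_adj_iff.mp hpq).2
    refine ⟨fun h => by subst h; omega, .single hpq, fun u hpu huq => ?_⟩
    rcases skew_reach_eq_or_lt hpu with h | h
    · exact .inl h.symm
    rcases skew_reach_eq_or_lt huq with h' | h'
    · exact .inr h'
    · omega
  · rintro ⟨hne, hpq, hcov⟩
    rcases hpq.cases_head with h | ⟨c, hpc, hcq⟩
    · exact absurd h hne
    rcases hcov c (.single hpc) hcq with rfl | rfl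
    · have := (skew_adj_iff.mp hpc).2; omega
    · exact hpc

theorem skew_reach_shift (k : ℤ) {p q : G.V × ℤ} :
    ReflTransGen G.skew.Adj (p.1, p.2 + k) (q.1, q.2 + k) ↔ ReflTransGen G.skew.Adj p q := by
  have shift : ∀ k : ℤ, G.skew.Adj ≤ Function.onFun G.skew.Adj fun p => (p.1, p.2 + k) := by
    intro k p q hpq
    obtain ⟨hadj, hlevel⟩ := skew_adj_iff.mp hpq
    exact skew_adj_iff.mpr ⟨hadj, by simp only; omega⟩
  refine ⟨fun h => ?_, ReflTransGen.lift _ (shift k) _ _⟩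
  simpa [Function.onFun] using ReflTransGen.lift _ (shift (-k)) _ _ h

theorem mem_Hgen_iff {v : G.V} {n : ℤ} {q : G.V × ℤ} :
    q ∈ G.Hgen v n ↔ ReflTransGen G.skew.Adj (v, n) q := by
  refine ⟨fun hq => hq {q | ReflTransGen G.skew.Adj (v, n) q} ⟨?_, .refl⟩,
    fun hq K ⟨hK, hv⟩ => ?_⟩
  · exact hereditary_iff_adj.mpr fun _ _ hab ha => ha.tail hab
  · induction hq with
    | refl => exact hv
    | tail _ hab ih => exact hereditary_iff_adj.mp hK _ _ hab ih

instance : PartialOrder G.HS := Subtype.partialOrder _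

def principal (G : DirGraph) (p : G.V × ℤ) : G.HS :=
  ⟨G.Hgen p.1 p.2, fun _ he _ hK => hK.1 _ (he _ hK)⟩

theorem principal_le_iff {p : G.V × ℤ} {A : G.HS} : G.principal p ≤ A ↔ p ∈ A.1 :=
  ⟨fun h => h (mem_Hgen_iff.mpr .refl), fun hp _ hq => hq A.1 ⟨A.2, hp⟩⟩

theorem principal_le_principal_iff {p q : G.V × ℤ} :
    G.principal q ≤ G.principal p ↔ ReflTransGen G.skew.Adj p q :=
  principal_le_iff.trans mem_Hgen_iff

theorem principal_injective : Function.Injective G.principal := fun _ _ h =>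
  skew_reach_antisymm (principal_le_principal_iff.mp h.ge) (principal_le_principal_iff.mp h.le)

theorem mem_lt_iff {k : ℤ} {H : Set (G.V × ℤ)} {p : G.V × ℤ} :
    p ∈ G.lt k H ↔ (p.1, p.2 - k) ∈ H :=
  ⟨by rintro ⟨q, hq, rfl⟩; simpa using hq, fun h => ⟨_, h, by simp⟩⟩

theorem ltH_principal (k : ℤ) (p : G.V × ℤ) :
    G.ltH k (G.principal p) = G.principal (p.1, p.2 + k) := by
  refine Subtype.ext (Set.ext fun q => ?_)
  change q ∈ G.lt k (G.Hgen p.1 p.2) ↔ q ∈ G.Hgen p.1 (p.2 + k)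
  simp only [lt, Set.mem_image, mem_Hgen_iff]
  constructor
  · rintro ⟨q, hq, rfl⟩
    exact (skew_reach_shift k).mpr hq
  · intro hq
    refine ⟨(q.1, q.2 - k), (skew_reach_shift k).mp ?_, by simp⟩
    simpa using hq

theorem uniquePred_iff_exists_isGreatest (A : G.HS) :
    G.UniquePred A.1 ↔ ∃ K, IsGreatest (Set.Iio A) K :=
  ⟨fun ⟨K, hK, hlt, hmax⟩ => ⟨⟨K, hK⟩, hlt, fun K' h => hmax K'.1 K'.2 h⟩,
    fun ⟨K, hlt, hmax⟩ => ⟨K.1, K.2, hlt, fun K' hK' h => hmax (a := ⟨K', hK'⟩) h⟩⟩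

theorem uniquePred_principal (p : G.V × ℤ) : G.UniquePred (G.principal p).1 := by
  have hK : G.skew.Hereditary (G.Hgen p.1 p.2 \ {p}) := by
    refine hereditary_iff_adj.mpr fun a b hab ⟨ha, hap⟩ =>
      ⟨hereditary_iff_adj.mp (G.principal p).2 _ _ hab ha, ?_⟩
    rintro rfl
    have := (skew_adj_iff.mp hab).2
    rcases skew_reach_eq_or_lt (mem_Hgen_iff.mp ha) with rfl | h
    · exact hap rfl
    · omega
  refine (uniquePred_iff_exists_isGreatest _).mpr ⟨⟨_, hK⟩, ?_, fun K' hK' q hq => ?_⟩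
  · exact Set.sdiff_singleton_ssubset.mpr (mem_Hgen_iff.mpr .refl)
  · refine ⟨(Set.mem_Iio.mp hK').le hq, fun hqp => ?_⟩
    rw [Set.mem_singleton_iff.mp hqp, ← principal_le_iff] at hq
    exact hK'.not_ge hq

theorem exists_principal_of_uniquePred {A : G.HS} (hA : G.UniquePred A.1) :
    A ∈ Set.range G.principal := by
  obtain ⟨K, hKA, hmax⟩ := (uniquePred_iff_exists_isGreatest A).mp hA
  obtain ⟨p, hpA, hpK⟩ := Set.exists_of_ssubset hKA
  refine ⟨p, (principal_le_iff.mpr hpA).eq_of_not_lt fun hlt => hpK ?_⟩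
  exact principal_le_iff.mp (hmax hlt)

theorem uniquePred_iff_mem_range_principal (A : G.HS) :
    G.UniquePred A.1 ↔ A ∈ Set.range G.principal :=
  ⟨exists_principal_of_uniquePred, by rintro ⟨p, rfl⟩; exact uniquePred_principal p⟩

theorem orderIso_apply_mem_range_principal (e : G.HS ≃o F.HS) {A : G.HS}
    (hA : A ∈ Set.range G.principal) : e A ∈ Set.range F.principal := by
  rw [← uniquePred_iff_mem_range_principal] at hA ⊢
  obtain ⟨K, hK⟩ := (uniquePred_iff_exists_isGreatest A).mp hA
  refine (uniquePred_iff_exists_isGreatest _).mpr ⟨e K, ?_⟩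
  rw [← e.image_Iio]
  exact e.monotone.map_isGreatest hK

noncomputable def principalEquiv (e : G.HS ≃o F.HS) : G.V × ℤ ≃ F.V × ℤ :=
  (Equiv.ofInjective _ principal_injective).trans <|
    (e.toEquiv.subtypeEquiv fun _ => ⟨orderIso_apply_mem_range_principal e,
      fun h => by simpa using orderIso_apply_mem_range_principal e.symm h⟩).trans
    (Equiv.ofInjective _ principal_injective).symm

theorem principal_principalEquiv (e : G.HS ≃o F.HS) (p : G.V × ℤ) :
    F.principal (principalEquiv e p) = e (G.principal p) :=
  Equiv.apply_ofInjective_symm principal_injective _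

theorem reach_principalEquiv_iff (e : G.HS ≃o F.HS) {p q : G.V × ℤ} :
    ReflTransGen F.skew.Adj (principalEquiv e p) (principalEquiv e q) ↔
      ReflTransGen G.skew.Adj p q := by
  rw [← principal_le_principal_iff, ← principal_le_principal_iff, principal_principalEquiv,
    principal_principalEquiv, e.le_iff_le]

theorem skew_adj_principalEquiv_iff (e : G.HS ≃o F.HS) {p q : G.V × ℤ} :
    F.skew.Adj (principalEquiv e p) (principalEquiv e q) ↔ G.skew.Adj p q := by
  rw [skew_adj_iff_covBy, skew_adj_iff_covBy, ← (principalEquiv e).forall_congr_right]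
  simp only [reach_principalEquiv_iff, (principalEquiv e).injective.ne_iff,
    (principalEquiv e).apply_eq_iff_eq]

theorem principalEquiv_apply (e : G.HS ≃o F.HS)
    (he : ∀ (n : ℤ) (A : G.HS), e (G.ltH n A) = F.ltH n (e A)) (v : G.V) (n : ℤ) :
    principalEquiv e (v, n) =
      ((principalEquiv e (v, 0)).1, n + (principalEquiv e (v, 0)).2) := by
  apply principal_injective
  rw [add_comm n, ← ltH_principal, principal_principalEquiv, principal_principalEquiv, ← he,
    ltH_principal, zero_add]

theorem exists_adj_equiv_of_skew (σ : G.V × ℤ ≃ F.V × ℤ)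
    (hσ : ∀ v n, σ (v, n) = ((σ (v, 0)).1, n + (σ (v, 0)).2))
    (hadj : ∀ p q, F.skew.Adj (σ p) (σ q) ↔ G.skew.Adj p q) :
    ∃ φ : G.V ≃ F.V, ∀ v w, F.Adj (φ v) (φ w) ↔ G.Adj v w := by
  set φ : G.V → F.V := fun v => (σ (v, 0)).1
  set g : G.V → ℤ := fun v => (σ (v, 0)).2
  have key : ∀ v w n m,
      G.skew.Adj (v, n) (w, m) ↔ F.Adj (φ v) (φ w) ∧ m + g w = n + g v + 1 := by
    intro v w n m
    rw [← hadj, hσ v, hσ w, skew_adj_iff]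
  have hφ : ∀ v w, F.Adj (φ v) (φ w) ↔ G.Adj v w := fun v w =>
    ⟨fun h => (skew_adj_iff.mp ((key v w 0 (g v + 1 - g w)).mpr ⟨h, by ring⟩)).1,
      fun h => ((key v w 0 1).mp (skew_adj_iff.mpr ⟨h, rfl⟩)).1⟩
  have hinj : Function.Injective φ := fun v w h => by
    have : σ (v, 0) = σ (w, g v - g w) := by
      rw [hσ v, hσ w]
      exact Prod.ext h (by simp [g])
    exact congrArg Prod.fst (σ.injective this)
  have hsurj : Function.Surjective φ := fun x => by
    refine ⟨(σ.symm (x, 0)).1, ?_⟩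
    have := hσ (σ.symm (x, 0)).1 (σ.symm (x, 0)).2
    rw [Prod.mk.eta, σ.apply_symm_apply] at this
    exact (congrArg Prod.fst this).symm
  exact ⟨Equiv.ofBijective φ ⟨hinj, hsurj⟩, hφ⟩

def hereditaryCongr {X Y : DirGraph} (Ψ : X.V ≃ Y.V)
    (hΨ : ∀ a b, Y.Adj (Ψ a) (Ψ b) ↔ X.Adj a b) :
    {K // X.Hereditary K} ≃ {K // Y.Hereditary K} where
  toFun K := ⟨Ψ.symm ⁻¹' K.1, K.2.preimage fun a b h => by
    rwa [← hΨ, Ψ.apply_symm_apply, Ψ.apply_symm_apply]⟩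
  invFun K := ⟨Ψ ⁻¹' K.1, K.2.preimage fun a b => (hΨ a b).mpr⟩
  left_inv K := Subtype.ext (Ψ.preimage_symm_preimage K.1)
  right_inv K := Subtype.ext (Ψ.symm_preimage_preimage K.1)

theorem skew_adj_prodCongr_iff {φ : G.V ≃ F.V} (hφ : ∀ v w, F.Adj (φ v) (φ w) ↔ G.Adj v w)
    (p q : G.V × ℤ) :
    F.skew.Adj (φ.prodCongr (Equiv.refl ℤ) p) (φ.prodCongr (Equiv.refl ℤ) q) ↔
      G.skew.Adj p q := by
  simp only [skew_adj_iff, Equiv.prodCongr_apply, Prod.map, Equiv.refl_apply, hφ]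

def hsCongr (φ : G.V ≃ F.V) (hφ : ∀ v w, F.Adj (φ v) (φ w) ↔ G.Adj v w) : G.HS ≃ F.HS :=
  hereditaryCongr (X := G.skew) (Y := F.skew) (φ.prodCongr (Equiv.refl ℤ))
    (skew_adj_prodCongr_iff hφ)

theorem hsCongr_subset_hsCongr_iff (φ : G.V ≃ F.V) (hφ : ∀ v w, F.Adj (φ v) (φ w) ↔ G.Adj v w)
    (A B : G.HS) : (hsCongr φ hφ A).1 ⊆ (hsCongr φ hφ B).1 ↔ A.1 ⊆ B.1 :=
  Equiv.preimage_subset _ _ _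

theorem hsCongr_ltH (φ : G.V ≃ F.V) (hφ : ∀ v w, F.Adj (φ v) (φ w) ↔ G.Adj v w) (n : ℤ)
    (A : G.HS) : hsCongr φ hφ (G.ltH n A) = F.ltH n (hsCongr φ hφ A) :=
  Subtype.ext <| Set.ext fun q => by
    change (φ.symm q.1, q.2) ∈ G.lt n A.1 ↔ q ∈ F.lt n (hsCongr φ hφ A).1
    rw [mem_lt_iff, mem_lt_iff]
    rfl

theorem hsCongr_H0H (φ : G.V ≃ F.V) (hφ : ∀ v w, F.Adj (φ v) (φ w) ↔ G.Adj v w) :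
    hsCongr φ hφ G.H0H = F.H0H :=
  rfl

end DirGraph

open DirGraph

theorem iso_carrying_H0_general (G F : DirGraph)
    (ρ : G.HS ≃ F.HS)
    (hmono : ∀ A B : G.HS, A.1 ⊆ B.1 ↔ (ρ A).1 ⊆ (ρ B).1)
    (heqv : ∀ (n : ℤ) (A : G.HS), ρ (G.ltH n A) = F.ltH n (ρ A)) :
    ∃ ρ' : G.HS ≃ F.HS,
      (∀ A B : G.HS, A.1 ⊆ B.1 ↔ (ρ' A).1 ⊆ (ρ' B).1) ∧
      (∀ (n : ℤ) (A : G.HS), ρ' (G.ltH n A) = F.ltH n (ρ' A)) ∧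
      ρ' G.H0H = F.H0H := by
  let e : G.HS ≃o F.HS := ⟨ρ, fun {A B} => (hmono A B).symm⟩
  obtain ⟨φ, hφ⟩ := exists_adj_equiv_of_skew (principalEquiv e) (principalEquiv_apply e heqv)
    fun _ _ => skew_adj_principalEquiv_iff e
  exact ⟨hsCongr φ hφ, fun A B => (hsCongr_subset_hsCongr_iff φ hφ A B).symm, hsCongr_ltH φ hφ,
    hsCongr_H0H φ hφ⟩

theorem iso_carrying_H0 (G F : DirGraph)
    [Countable G.V] [Countable G.E] [Countable F.V] [Countable F.E]
    (hG : G.Amplified) (hF : F.Amplified)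
    (ρ : G.HS ≃ F.HS)
    (hmono : ∀ A B : G.HS, A.1 ⊆ B.1 ↔ (ρ A).1 ⊆ (ρ B).1)
    (heqv : ∀ (n : ℤ) (A : G.HS), ρ (G.ltH n A) = F.ltH n (ρ A)) :
    ∃ ρ' : G.HS ≃ F.HS,
      (∀ A B : G.HS, A.1 ⊆ B.1 ↔ (ρ' A).1 ⊆ (ρ' B).1) ∧
      (∀ (n : ℤ) (A : G.HS), ρ' (G.ltH n A) = F.ltH n (ρ' A)) ∧
      ρ' G.H0H = F.H0H :=
  iso_carrying_H0_general G F ρ hmono heqv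
end

section
/- Let E be a countable directed graph and let v, w ∈ E⁰. The following are equivalent: (a) vE*w ≠ ∅ (there is a path, possibly of length 0, from v to w); (b) for some i, j ∈ ℤ, ⋃_{n ∈ ℤ} lt_n(H(w, i)) ⊆ ⋃_{n ∈ ℤ} lt_n(H(v, j)); (c) for all i, j ∈ ℤ, ⋃_{n ∈ ℤ} lt_n(H(w, i)) ⊆ ⋃_{n ∈ ℤ} lt_n(H(v, j)). -/
namespace DirGraph

variable (G : DirGraph)

lemma pathRel_snoc {v u : G.V} {k : ℕ} (h : G.PathRel v u k) (e : G.E) (he : G.s e = u) :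
    G.PathRel v (G.r e) (k + 1) := by
  induction h with
  | nil v => subst he; exact PathRel.cons e (PathRel.nil _)
  | cons f h ih => exact PathRel.cons f (ih he)

lemma pathRel_trans {v w u : G.V} {k k' : ℕ} (h1 : G.PathRel v w k) (h2 : G.PathRel w u k') :
    G.PathRel v u (k + k') := by
  induction h1 with
  | nil v => simpa using h2
  | cons f h ih =>
    have := PathRel.cons f (ih h2)
    convert this using 1
    omega

lemma mem_of_pathRel {v u : G.V} {k : ℕ} (h : G.PathRel v u k) :
    ∀ j : ℤ, ∀ K : Set (G.V × ℤ), G.skew.Hereditary K → (v, j) ∈ K → (u, j + (k : ℤ)) ∈ K := by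
  induction h with
  | nil v => intro j K hK hv; simpa using hv
  | cons e h ih =>
    intro j K hK hv
    have h1 : (G.r e, j + 1) ∈ K := hK (e, j) hv
    have h2 := ih (j + 1) K hK h1
    convert h2 using 2
    push_cast
    ring

lemma hgen_eq_s18 (v : G.V) (j : ℤ) :
    G.Hgen v j = {p : G.V × ℤ | ∃ k : ℕ, G.PathRel v p.1 k ∧ p.2 = j + (k : ℤ)} := by
  apply subset_antisymm
  · apply Set.sInter_subset_of_mem
    constructor
    · rintro ⟨f, m⟩ ⟨k, hp, hm⟩
      exact ⟨k + 1, G.pathRel_snoc hp f rfl, by simp only [skew] at hm ⊢; omega⟩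
    · exact ⟨0, PathRel.nil v, by simp⟩
  · rintro ⟨u, m⟩ ⟨k, hp, hm⟩ K ⟨hK, hvK⟩
    subst hm
    exact G.mem_of_pathRel hp j K hK hvK

lemma union_lt_hgen (v : G.V) (i : ℤ) :
    (⋃ n : ℤ, G.lt n (G.Hgen v i)) = {p : G.V × ℤ | ∃ k : ℕ, G.PathRel v p.1 k} := by
  ext ⟨u, m⟩
  simp only [Set.mem_iUnion, lt, hgen_eq_s18, Set.mem_image, Set.mem_setOf_eq]
  constructor
  · rintro ⟨n, ⟨u', m'⟩, ⟨k, hp, hm⟩, heq⟩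
    have : u' = u := congrArg Prod.fst heq
    subst this
    exact ⟨k, hp⟩
  · rintro ⟨k, hp⟩
    exact ⟨m - (i + k), (u, i + k), ⟨k, hp, rfl⟩, by simp⟩

end DirGraph

open DirGraph

theorem path_iff_union_translates_subset (G : DirGraph) [Countable G.V] [Countable G.E]
    (v w : G.V) :
    List.TFAE [
      (∃ k : ℕ, G.PathRel v w k),
      (∃ i j : ℤ, (⋃ n : ℤ, G.lt n (G.Hgen w i)) ⊆ ⋃ n : ℤ, G.lt n (G.Hgen v j)),
      (∀ i j : ℤ, (⋃ n : ℤ, G.lt n (G.Hgen w i)) ⊆ ⋃ n : ℤ, G.lt n (G.Hgen v j))] := by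
  tfae_have 1 → 3 := by
    rintro ⟨k, hp⟩ i j
    rw [union_lt_hgen, union_lt_hgen]
    rintro ⟨u, m⟩ ⟨k', hp'⟩
    exact ⟨k + k', G.pathRel_trans hp hp'⟩
  tfae_have 3 → 2 := fun h => ⟨0, 0, h 0 0⟩
  tfae_have 2 → 1 := by
    rintro ⟨i, j, h⟩
    have hw : ((w, (0 : ℤ)) : G.V × ℤ) ∈ ⋃ n : ℤ, G.lt n (G.Hgen w i) := by
      rw [union_lt_hgen]; exact ⟨0, PathRel.nil w⟩
    have := h hw
    rw [union_lt_hgen] at this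
    exact this
  tfae_finish
end
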